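/- arXiv:1205.7022 — 2 statements merged into one kernel-verified Lean document; each statement's English description precedes it below -/
import Mathlib

section
/- Let (Ω,𝒜,ℙ) be a probability space, p ∈ [2,4], and let 𝒢 be a sub-σ-algebra of 𝒜. Then for any real random variables X and Y in L^p(ℙ), ‖E(XY|𝒢)‖_{p/2} ≤ ‖E(X²|𝒢) − E(X²)‖_{p/2} + ‖Y‖_p² + (E(X²))^{1/2} ‖Y‖_2. -/
/-!
With `A = E(X²|𝒢)`, `B = E(Y²|𝒢)` and `c = E(X²)`, conditional Cauchy–Schwarz gives
`|E(XY|𝒢)| ≤ √A √B`; it follows from `E((tX + Y)²|𝒢) ≥ 0` for all rational `t` at once, which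
makes the discriminant of the quadratic `A t² + 2 E(XY|𝒢) t + B` nonpositive. Pointwise,
`√A ≤ √|A - c| + √c` and `√|A - c| √B ≤ |A - c| + B`, so
`|E(XY|𝒢)| ≤ |A - c| + B + √c √B`. Minkowski in `L^{p/2}` (as `p/2 ≥ 1`), the `L^{p/2}`-contraction
of conditional expectation, `‖B‖_{p/2} ≤ ‖Y²‖_{p/2} = ‖Y‖_p²`, and `‖√B‖_{p/2} ≤ ‖√B‖_2 ≤ ‖Y‖_2`
(as `p/2 ≤ 2`) finish the proof.
-/

open MeasureTheory ENNReal

namespace Real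

lemma abs_le_sqrt_mul_sqrt_of_forall_rat_quadratic_nonneg {a b c : ℝ}
    (h : ∀ t : ℚ, 0 ≤ a * (t * t) + 2 * b * t + c) : |b| ≤ √a * √c := by
  have hreal : ∀ t : ℝ, 0 ≤ a * (t * t) + 2 * b * t + c := fun t =>
    Rat.denseRange_cast.induction_on t (isClosed_le continuous_const (by fun_prop)) h
  have hdisc : (2 * b) ^ 2 - 4 * a * c ≤ 0 := discrim_le_zero hreal
  rw [← sqrt_mul' a (by simpa using hreal 0)]
  exact abs_le_sqrt (by linarith)

lemma sqrt_mul_sqrt_le_abs_sub_add (a : ℝ) {b c : ℝ} (hb : 0 ≤ b) (hc : 0 ≤ c) :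
    √a * √b ≤ |a - c| + b + √c * √b := by
  have hd := sq_sqrt (abs_nonneg (a - c))
  have hsa : √a ≤ √|a - c| + √c := by
    rw [sqrt_le_iff]
    refine ⟨by positivity, ?_⟩
    nlinarith [sq_sqrt hc, le_abs_self (a - c), sqrt_nonneg |a - c|, sqrt_nonneg c]
  nlinarith [mul_le_mul_of_nonneg_right hsa (sqrt_nonneg b), sq_sqrt hb,
    sq_nonneg (√|a - c| - √b)]

end Real

namespace MeasureTheory

variable {Ω : Type*} {m m0 : MeasurableSpace Ω} {μ : Measure Ω}

lemma condExp_mul_add_sq_ae_eq {X Y : Ω → ℝ} (hX : MemLp X 2 μ) (hY : MemLp Y 2 μ) (t : ℝ) :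
    μ[fun ω => (t * X ω + Y ω) ^ 2|m] =ᵐ[μ] fun ω =>
      μ[fun ω => X ω ^ 2|m] ω * (t * t) + 2 * μ[fun ω => X ω * Y ω|m] ω * t
        + μ[fun ω => Y ω ^ 2|m] ω := by
  have hXY : Integrable (fun ω => X ω * Y ω) μ := hX.integrable_mul hY
  have hexp : (fun ω => (t * X ω + Y ω) ^ 2) =
      (t * t) • (fun ω => X ω ^ 2) + (2 * t) • (fun ω => X ω * Y ω) + fun ω => Y ω ^ 2 := by
    ext ω; simp only [Pi.add_apply, Pi.smul_apply, smul_eq_mul]; ring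
  rw [hexp]
  filter_upwards
    [condExp_add ((hX.integrable_sq.smul (t * t)).add (hXY.smul (2 * t))) hY.integrable_sq m,
    condExp_add (hX.integrable_sq.smul (t * t)) (hXY.smul (2 * t)) m,
    condExp_smul (m := m) (μ := μ) (t * t) (fun ω => X ω ^ 2),
    condExp_smul (m := m) (μ := μ) (2 * t) (fun ω => X ω * Y ω)] with ω h1 h2 h3 h4
  simp only [h1, Pi.add_apply, h2, h3, h4, Pi.smul_apply, smul_eq_mul]
  ring

theorem ae_abs_condExp_mul_le_sqrt_mul_sqrt {X Y : Ω → ℝ} (hX : MemLp X 2 μ) (hY : MemLp Y 2 μ) :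
    ∀ᵐ ω ∂μ, |μ[fun ω => X ω * Y ω|m] ω| ≤
      √(μ[fun ω => X ω ^ 2|m] ω) * √(μ[fun ω => Y ω ^ 2|m] ω) := by
  have hquad : ∀ t : ℚ, ∀ᵐ ω ∂μ, 0 ≤ μ[fun ω => X ω ^ 2|m] ω * (t * t)
      + 2 * μ[fun ω => X ω * Y ω|m] ω * t + μ[fun ω => Y ω ^ 2|m] ω := fun t => by
    filter_upwards [condExp_mul_add_sq_ae_eq (m := m) hX hY t,
      condExp_nonneg (m := m) (ae_of_all μ fun ω => sq_nonneg (t * X ω + Y ω))] with ω h h0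
    rw [← h]; exact h0
  filter_upwards [ae_all_iff.2 hquad] with ω h
  exact Real.abs_le_sqrt_mul_sqrt_of_forall_rat_quadratic_nonneg h

lemma eLpNorm_sq (f : Ω → ℝ) (p : ℝ≥0∞) :
    eLpNorm (fun ω => f ω ^ 2) p μ = eLpNorm f (p * 2) μ ^ 2 := by
  have := eLpNorm_norm_rpow (p := p) (μ := μ) f two_pos
  simp only [Real.norm_eq_abs, Real.rpow_two, sq_abs, ofReal_ofNat] at this
  rw [this, ← ENNReal.rpow_natCast]; norm_num

lemma eLpNorm_sqrt {f : Ω → ℝ} (hf : 0 ≤ᵐ[μ] f) (p : ℝ≥0∞) :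
    eLpNorm (fun ω => √(f ω)) (p * 2) μ = eLpNorm f p μ ^ (1 / 2 : ℝ) := by
  have hsqrt : (fun ω => √(f ω)) =ᵐ[μ] fun ω => ‖f ω‖ ^ (1 / 2 : ℝ) := by
    filter_upwards [hf] with ω hω
    rw [Real.norm_eq_abs, abs_of_nonneg hω, Real.sqrt_eq_rpow]
  have htwo : (2 : ℝ≥0∞) * ENNReal.ofReal (1 / 2) = 1 := by
    rw [← ofReal_ofNat 2, ← ofReal_mul zero_le_two]; norm_num
  rw [eLpNorm_congr_ae hsqrt, eLpNorm_norm_rpow f one_half_pos, mul_assoc, htwo, mul_one]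

lemma eLpNorm_condExp_sq_le {Y : Ω → ℝ} {q : ℝ≥0∞} (hq : 1 ≤ q) :
    eLpNorm (μ[fun ω => Y ω ^ 2|m]) q μ ≤ eLpNorm Y (q * 2) μ ^ 2 :=
  (eLpNorm_condExp_le_eLpNorm _ hq).trans (eLpNorm_sq Y q).le

lemma eLpNorm_sqrt_condExp_sq_le {Y : Ω → ℝ} {q : ℝ≥0∞} (hq : 1 ≤ q) :
    eLpNorm (fun ω => √(μ[fun ω => Y ω ^ 2|m] ω)) (q * 2) μ ≤ eLpNorm Y (q * 2) μ := by
  rw [eLpNorm_sqrt (condExp_nonneg (ae_of_all μ fun ω => sq_nonneg (Y ω)))]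
  calc eLpNorm (μ[fun ω => Y ω ^ 2|m]) q μ ^ (1 / 2 : ℝ)
      ≤ (eLpNorm Y (q * 2) μ ^ 2) ^ (1 / 2 : ℝ) := by gcongr; exact eLpNorm_condExp_sq_le hq
    _ = eLpNorm Y (q * 2) μ := by rw [← ENNReal.rpow_natCast, ← ENNReal.rpow_mul]; norm_num

lemma eLpNorm_sqrt_condExp_sq_le_eLpNorm_two [IsProbabilityMeasure μ] {Y : Ω → ℝ} {q : ℝ≥0∞}
    (hq : q ≤ 2) : eLpNorm (fun ω => √(μ[fun ω => Y ω ^ 2|m] ω)) q μ ≤ eLpNorm Y 2 μ := by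
  have hmeas : AEStronglyMeasurable[m0] (μ[fun ω => Y ω ^ 2|m]) μ := integrable_condExp.1
  calc eLpNorm (fun ω => √(μ[fun ω => Y ω ^ 2|m] ω)) q μ
      ≤ eLpNorm (fun ω => √(μ[fun ω => Y ω ^ 2|m] ω)) (1 * 2) μ :=
        eLpNorm_le_eLpNorm_of_exponent_le (by simpa using hq) (by fun_prop)
    _ ≤ eLpNorm Y 2 μ := by simpa using eLpNorm_sqrt_condExp_sq_le (m := m) (μ := μ) (Y := Y) le_rfl

end MeasureTheory

theorem stmt_13_general {Ω : Type*} [m0 : MeasurableSpace Ω] (ℙ : Measure Ω) [IsProbabilityMeasure ℙ]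
    (p : ℝ) (hp2 : 2 ≤ p) (hp4 : p ≤ 4) (𝒢 : MeasurableSpace Ω)
    (X Y : Ω → ℝ) (hX : MemLp X (ENNReal.ofReal p) ℙ) (hY : MemLp Y (ENNReal.ofReal p) ℙ) :
    eLpNorm (ℙ[fun ω => X ω * Y ω|𝒢]) (ENNReal.ofReal (p / 2)) ℙ
      ≤ eLpNorm (fun ω => (ℙ[fun ω' => X ω' ^ 2|𝒢]) ω - ∫ ω', X ω' ^ 2 ∂ℙ)
          (ENNReal.ofReal (p / 2)) ℙ
        + (eLpNorm Y (ENNReal.ofReal p) ℙ) ^ 2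
        + ENNReal.ofReal (Real.sqrt (∫ ω', X ω' ^ 2 ∂ℙ)) * eLpNorm Y 2 ℙ := by
  set q := ENNReal.ofReal (p / 2)
  have hq1 : 1 ≤ q := by rw [← ofReal_one]; exact ofReal_le_ofReal (by linarith)
  have hq2 : q ≤ 2 := by rw [← ofReal_ofNat 2]; exact ofReal_le_ofReal (by linarith)
  have hqp : q * 2 = ENNReal.ofReal p := by
    rw [← ofReal_ofNat 2, ← ofReal_mul (by linarith)]; ring_nf
  have h2p : (2 : ℝ≥0∞) ≤ ENNReal.ofReal p := by rw [← ofReal_ofNat 2]; exact ofReal_le_ofReal hp2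
  set A := ℙ[fun ω' => X ω' ^ 2|𝒢]
  set B := ℙ[fun ω' => Y ω' ^ 2|𝒢]
  set c := ∫ ω', X ω' ^ 2 ∂ℙ
  have hc : 0 ≤ c := integral_nonneg fun ω => sq_nonneg (X ω)
  have hB : 0 ≤ᵐ[ℙ] B := condExp_nonneg (ae_of_all ℙ fun ω => sq_nonneg (Y ω))
  have hpointwise : ∀ᵐ ω ∂ℙ, ‖ℙ[fun ω => X ω * Y ω|𝒢] ω‖ ≤ ‖A ω - c‖ + B ω + √c * √(B ω) := by
    filter_upwards [ae_abs_condExp_mul_le_sqrt_mul_sqrt (m := 𝒢) (hX.mono_exponent h2p)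
      (hY.mono_exponent h2p), hB] with ω hCS hBω
    exact hCS.trans (Real.sqrt_mul_sqrt_le_abs_sub_add _ hBω hc)
  -- `𝒢` is a local instance as well, so the ambient σ-algebra has to be named.
  have hAm : AEStronglyMeasurable[m0] A ℙ := integrable_condExp.1
  have hBm : AEStronglyMeasurable[m0] B ℙ := integrable_condExp.1
  calc eLpNorm (ℙ[fun ω => X ω * Y ω|𝒢]) q ℙ
      ≤ eLpNorm (fun ω => ‖A ω - c‖ + B ω + √c * √(B ω)) q ℙ := eLpNorm_mono_ae_real hpointwise
    _ ≤ eLpNorm (fun ω => ‖A ω - c‖) q ℙ + eLpNorm B q ℙ + eLpNorm (√c • fun ω => √(B ω)) q ℙ :=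
        (eLpNorm_add_le (by fun_prop) (by fun_prop) hq1).trans
          (add_le_add_left (eLpNorm_add_le (by fun_prop) hBm hq1) _)
    _ ≤ _ := by
      rw [eLpNorm_norm, eLpNorm_const_smul, Real.enorm_eq_ofReal (Real.sqrt_nonneg c), ← hqp]
      gcongr
      · exact eLpNorm_condExp_sq_le hq1
      · exact eLpNorm_sqrt_condExp_sq_le_eLpNorm_two hq2

/-- Inequality (fact) of the paper: for `p ∈ [2,4]`, `X, Y ∈ L^p` and a sub-σ-algebra `𝒢`,
`‖E(XY|𝒢)‖_{p/2} ≤ ‖E(X²|𝒢) − E(X²)‖_{p/2} + ‖Y‖_p² + (E(X²))^{1/2} ‖Y‖_2`. -/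
theorem stmt_13 {Ω : Type*} [m0 : MeasurableSpace Ω] (ℙ : Measure Ω) [IsProbabilityMeasure ℙ]
    (p : ℝ) (hp2 : 2 ≤ p) (hp4 : p ≤ 4) (𝒢 : MeasurableSpace Ω) (h𝒢 : 𝒢 ≤ m0)
    (X Y : Ω → ℝ) (hX : MemLp X (ENNReal.ofReal p) ℙ) (hY : MemLp Y (ENNReal.ofReal p) ℙ) :
    eLpNorm (ℙ[fun ω => X ω * Y ω|𝒢]) (ENNReal.ofReal (p / 2)) ℙ
      ≤ eLpNorm (fun ω => (ℙ[fun ω' => X ω' ^ 2|𝒢]) ω - ∫ ω', X ω' ^ 2 ∂ℙ)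
          (ENNReal.ofReal (p / 2)) ℙ
        + (eLpNorm Y (ENNReal.ofReal p) ℙ) ^ 2
        + ENNReal.ofReal (Real.sqrt (∫ ω', X ω' ^ 2 ∂ℙ)) * eLpNorm Y 2 ℙ :=
  stmt_13_general (m0 := m0) ℙ p hp2 hp4 𝒢 X Y hX hY
end

section
/- Let p ∈ [2,4] and let d₀ ∈ L^p(ℙ) be 𝓕₀-measurable with E(d₀|𝓕₋₁) = 0. Set dᵢ = d₀∘Tⁱ and Mₙ = Σ_{i=1}^n dᵢ, and define Vₙ = ‖E₀(Mₙ²) − E(Mₙ²)‖_{p/2} for n ≥ 1 (with V₀ = 0). Then for all nonnegative integers i and j, V_{i+j} ≤ V_i + V_j. -/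
/-!
Write `Sₙ = Σ_{k=1}^n d₀ ∘ Tᵏ`, a Birkhoff sum of `d₀ ∘ T`, so that `S_{i+j} = S_i + S_j ∘ Tⁱ`.
The block `S_j ∘ Tⁱ` has zero conditional expectation given `𝓕ᵢ`, in which `S_i` is measurable,
so the cross term of `S_{i+j}²` vanishes after conditioning on `𝓕₀`, and the centred conditional
second moment `Zₙ = E₀(Sₙ²) − E(Sₙ²)` splits as `Z_{i+j} = Z_i + (E₀((S_j ∘ Tⁱ)²) − E(S_j²))`.
Since `𝓕₀ = Tⁱ⁻¹(𝓕₋ᵢ)`, stationarity identifies the second summand with `E(Z_j | 𝓕₋ᵢ) ∘ Tⁱ`,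
whose `L^{p/2}` norm is at most `‖Z_j‖_{p/2}` by conditional Jensen. Minkowski's inequality
in `L^{p/2}`, valid because `p ≥ 2`, concludes.
-/

open MeasureTheory
open scoped ENNReal

noncomputable section

theorem MeasurableSpace.comap_le_comap_iff_of_surjective {α β : Type*} {f : α → β}
    (hf : Function.Surjective f) {m₁ m₂ : MeasurableSpace β} :
    m₁.comap f ≤ m₂.comap f ↔ m₁ ≤ m₂ := by
  refine ⟨fun h => ?_, fun h => MeasurableSpace.comap_mono h⟩
  simpa only [MeasurableSpace.map_comap_eq_of_surjective hf] using
    MeasurableSpace.map_mono (f := f) h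

theorem Finset.sum_Icc_one_iterate_eq_birkhoffSum {α M : Type*} [AddCommMonoid M] (f : α → α)
    (g : α → M) (n : ℕ) (x : α) :
    ∑ k ∈ Finset.Icc 1 n, g (f^[k] x) = birkhoffSum f (g ∘ f) n x := by
  induction n with
  | zero => simp
  | succ n ih =>
    rw [Finset.sum_Icc_succ_top (Nat.le_add_left 1 n), ih, birkhoffSum_succ, Function.comp_apply,
      ← Function.iterate_succ_apply' f n]

namespace MeasureTheory

theorem MemLp.birkhoffSum {α E : Type*} [MeasurableSpace α] [NormedAddCommGroup E]
    {μ : Measure α} {T : α → α} (hT : MeasurePreserving T μ μ) {g : α → E} {r : ℝ≥0∞}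
    (hg : MemLp g r μ) (n : ℕ) : MemLp (birkhoffSum T g n) r μ := by
  induction n with
  | zero => simp
  | succ n ih =>
    have hsucc : _root_.birkhoffSum T g (n + 1) = _root_.birkhoffSum T g n + g ∘ T^[n] :=
      funext (birkhoffSum_succ T g n)
    rw [hsucc]
    exact ih.add (hg.comp_measurePreserving (hT.iterate n))

theorem MemLp.sq {α : Type*} [MeasurableSpace α] {μ : Measure α} {f : α → ℝ} {r : ℝ≥0∞}
    (hf : MemLp f r μ) : MemLp (fun x => f x ^ 2) (r / 2) μ := by
  simpa [Real.norm_eq_abs, sq_abs] using hf.norm_rpow_div 2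

section CondExp

variable {Ω : Type*} {m m' m0 : MeasurableSpace Ω} {μ : Measure Ω}

theorem condExp_eq_zero_of_le [IsFiniteMeasure μ] (hm' : m' ≤ m) (hm : m ≤ m0) {f : Ω → ℝ}
    (hf : μ[f|m] =ᵐ[μ] 0) : μ[f|m'] =ᵐ[μ] 0 :=
  (condExp_condExp_of_le hm' hm).symm.trans ((condExp_congr_ae hf).trans (by rw [condExp_zero]))

theorem condExp_mul_eq_zero_of_condExp_eq_zero [IsFiniteMeasure μ] (hm' : m' ≤ m) (hm : m ≤ m0)
    {X Y : Ω → ℝ} (hX : StronglyMeasurable[m] X) (hXY : Integrable (X * Y) μ)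
    (hY : Integrable Y μ) (hY0 : μ[Y|m] =ᵐ[μ] 0) : μ[X * Y|m'] =ᵐ[μ] 0 := by
  refine condExp_eq_zero_of_le hm' hm ((condExp_mul_of_stronglyMeasurable_left hX hXY hY).trans ?_)
  filter_upwards [hY0] with ω hω
  simp [hω]

theorem condExp_comp_measurePreserving {β : Type*} {m mβ : MeasurableSpace β} {ν : Measure β}
    [IsFiniteMeasure μ] [IsFiniteMeasure ν] {S : Ω → β} (hS : MeasurePreserving S μ ν)
    (hm : m ≤ mβ) {g : β → ℝ} (hg : Integrable g ν) :
    μ[g ∘ S|m.comap S] =ᵐ[μ] ν[g|m] ∘ S := by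
  have hcomap_le : m.comap S ≤ m0 :=
    (MeasurableSpace.comap_mono hm).trans hS.measurable.comap_le
  have hS_meas : Measurable[m.comap S, m] S := Measurable.of_comap_le le_rfl
  have hsetIntegral : ∀ {h : β → ℝ}, AEStronglyMeasurable h ν → ∀ {s : Set β}, MeasurableSet s →
      ∫ ω in S ⁻¹' s, h (S ω) ∂μ = ∫ y in s, h y ∂ν := fun hh s hs => by
    rw [← setIntegral_map hs (hS.map_eq ▸ hh) hS.aemeasurable, hS.map_eq]
  refine (ae_eq_condExp_of_forall_setIntegral_eq hcomap_le
    (hS.integrable_comp_of_integrable hg)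
    (fun _ _ _ => (hS.integrable_comp_of_integrable integrable_condExp).integrableOn)
    (fun _ hs _ => ?_)
    (stronglyMeasurable_condExp.comp_measurable hS_meas).aestronglyMeasurable).symm
  obtain ⟨s, hs, rfl⟩ := hs
  simp only [Function.comp_apply]
  rw [hsetIntegral integrable_condExp.aestronglyMeasurable (hm s hs),
    hsetIntegral hg.aestronglyMeasurable (hm s hs), setIntegral_condExp hm hg hs]

def centeredCondSq (μ : Measure Ω) (m : MeasurableSpace Ω) (X : Ω → ℝ) : Ω → ℝ :=
  fun ω => μ[fun ω' => X ω' ^ 2|m] ω - ∫ ω', X ω' ^ 2 ∂μ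

theorem MemLp.centeredCondSq [IsFiniteMeasure μ] {X : Ω → ℝ} {r : ℝ≥0∞} (hr : 1 ≤ r)
    (hX : MemLp (fun ω => X ω ^ 2) r μ) : MemLp (centeredCondSq μ m X) r μ :=
  (hX.condExp hr).sub (memLp_const _)

theorem centeredCondSq_add [IsFiniteMeasure μ] (hm : m ≤ m0) {X Y : Ω → ℝ} (hX : MemLp X 2 μ)
    (hY : MemLp Y 2 μ) (hXY : μ[X * Y|m] =ᵐ[μ] 0) :
    centeredCondSq μ m (X + Y) =ᵐ[μ] centeredCondSq μ m X + centeredCondSq μ m Y := by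
  have hXY_int : Integrable (X * Y) μ := hX.integrable_mul hY
  have hsq : (fun ω => (X + Y) ω ^ 2)
      = (fun ω => X ω ^ 2) + ((fun ω => Y ω ^ 2) + (2 : ℝ) • (X * Y)) := by
    funext ω; simp only [Pi.add_apply, Pi.smul_apply, Pi.mul_apply, smul_eq_mul]; ring
  have hcross : ∫ ω, (X * Y) ω ∂μ = 0 := by
    rw [← integral_condExp hm, integral_congr_ae hXY, integral_zero']
  have h₁ := condExp_add hX.integrable_sq (hY.integrable_sq.add (hXY_int.smul (2 : ℝ))) m
  have h₂ := condExp_add hY.integrable_sq (hXY_int.smul (2 : ℝ)) m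
  have h₃ := condExp_smul (μ := μ) (2 : ℝ) (X * Y) m
  have hint : ∫ ω, ((fun ω => X ω ^ 2) + ((fun ω => Y ω ^ 2) + (2 : ℝ) • (X * Y))) ω ∂μ
      = ∫ ω, X ω ^ 2 ∂μ + ∫ ω, Y ω ^ 2 ∂μ := by
    rw [integral_add' hX.integrable_sq (hY.integrable_sq.add (hXY_int.smul (2 : ℝ))),
      integral_add' hY.integrable_sq (hXY_int.smul (2 : ℝ))]
    simp only [Pi.smul_apply, integral_smul, hcross, smul_zero, add_zero]
  filter_upwards [h₁, h₂, h₃, hXY] with ω e₁ e₂ e₃ e₄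
  show μ[fun ω' => (X + Y) ω' ^ 2|m] ω - ∫ ω', (X + Y) ω' ^ 2 ∂μ
    = (μ[fun ω' => X ω' ^ 2|m] ω - _) + (μ[fun ω' => Y ω' ^ 2|m] ω - _)
  rw [hsq, hint, e₁, Pi.add_apply, e₂, Pi.add_apply, e₃, Pi.smul_apply, e₄, Pi.zero_apply,
    smul_zero, add_zero]
  ring

theorem centeredCondSq_comp_measurePreserving {β : Type*} {m mβ : MeasurableSpace β}
    {ν : Measure β} [IsFiniteMeasure μ] [IsFiniteMeasure ν] {S : Ω → β}
    (hS : MeasurePreserving S μ ν) (hm : m ≤ mβ) {X : β → ℝ}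
    (hX : Integrable (fun y => X y ^ 2) ν) :
    centeredCondSq μ (m.comap S) (X ∘ S) =ᵐ[μ] centeredCondSq ν m X ∘ S := by
  have hint : ∫ ω, X (S ω) ^ 2 ∂μ = ∫ y, X y ^ 2 ∂ν := by
    simpa only [hS.map_eq] using (integral_map (f := fun y => X y ^ 2) hS.aemeasurable
      (hS.map_eq ▸ hX.aestronglyMeasurable)).symm
  filter_upwards [condExp_comp_measurePreserving hS hm hX] with ω hω
  simp only [centeredCondSq, Function.comp_apply, hint]
  exact congrArg (· - _) hω

theorem condExp_centeredCondSq_of_le [IsFiniteMeasure μ] (hm' : m' ≤ m) (hm : m ≤ m0)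
    {X : Ω → ℝ} : μ[centeredCondSq μ m X|m'] =ᵐ[μ] centeredCondSq μ m' X := by
  have hsub : centeredCondSq μ m X = μ[fun ω => X ω ^ 2|m] - fun _ => ∫ ω, X ω ^ 2 ∂μ := rfl
  filter_upwards [condExp_sub integrable_condExp (integrable_const (∫ ω, X ω ^ 2 ∂μ)) m',
    condExp_condExp_of_le (f := fun ω => X ω ^ 2) hm' hm] with ω h₁ h₂
  rw [hsub, h₁, Pi.sub_apply, h₂, condExp_const (hm'.trans hm)]
  rfl

theorem eLpNorm_centeredCondSq_comp_le [IsFiniteMeasure μ] {S : Ω → Ω}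
    (hS : MeasurePreserving S μ μ) (hm' : m' ≤ m) (hm : m ≤ m0) {X : Ω → ℝ}
    (hX : Integrable (fun ω => X ω ^ 2) μ) {r : ℝ≥0∞} (hr : 1 ≤ r) :
    eLpNorm (centeredCondSq μ (m'.comap S) (X ∘ S)) r μ ≤ eLpNorm (centeredCondSq μ m X) r μ :=
  calc eLpNorm (centeredCondSq μ (m'.comap S) (X ∘ S)) r μ
      = eLpNorm (centeredCondSq μ m' X ∘ S) r μ :=
        eLpNorm_congr_ae (centeredCondSq_comp_measurePreserving hS (hm'.trans hm) hX)
    _ = eLpNorm (centeredCondSq μ m' X) r μ :=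
        eLpNorm_comp_measurePreserving
          (integrable_condExp.sub (integrable_const _)).aestronglyMeasurable hS
    _ = eLpNorm (μ[centeredCondSq μ m X|m']) r μ :=
        eLpNorm_congr_ae (condExp_centeredCondSq_of_le hm' hm).symm
    _ ≤ eLpNorm (centeredCondSq μ m X) r μ := eLpNorm_condExp_le_eLpNorm _ hr

end CondExp

section StationaryFiltration

variable {Ω : Type*} {T : Ω → Ω} {F : ℤ → MeasurableSpace Ω}

theorem eq_comap_iterate_of_succ_eq_comap (hF : ∀ i, F (i + 1) = (F i).comap T) (k : ℤ)
    (n : ℕ) : F (k + n) = (F k).comap T^[n] := by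
  induction n with
  | zero => simp
  | succ n ih =>
    rw [Nat.cast_succ, ← add_assoc, hF, ih, MeasurableSpace.comap_comp, Function.iterate_succ]

theorem monotone_of_succ_eq_comap (hT : Function.Surjective T) (h0 : F 0 ≤ (F 0).comap T)
    (hF : ∀ i, F (i + 1) = (F i).comap T) : Monotone F := by
  refine monotone_int_of_le_succ fun k => ?_
  induction k using Int.induction_on with
  | zero => simpa using (hF 0).symm ▸ h0
  | succ n ih => rw [hF, hF]; exact MeasurableSpace.comap_mono ih
  | pred n ih =>
    rw [← MeasurableSpace.comap_le_comap_iff_of_surjective hT, ← hF, ← hF]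
    simpa using ih

end StationaryFiltration

section MartingaleDifference

variable {Ω : Type*} {m0 : MeasurableSpace Ω} {μ : Measure Ω} [IsFiniteMeasure μ] {T : Ω → Ω}
  {F : ℤ → MeasurableSpace Ω} {d : Ω → ℝ}

theorem measurable_birkhoffSum_of_succ_eq_comap (hF : ∀ i, F (i + 1) = (F i).comap T)
    (hFmono : Monotone F) (hd : Measurable[F 0] d) (n : ℕ) :
    Measurable[F n] (birkhoffSum T (d ∘ T) n) := by
  induction n with
  | zero => rw [birkhoffSum_zero']; exact measurable_const
  | succ n ih =>
    have hiterate : Measurable[F (n + 1 : ℕ), F 0] T^[n + 1] :=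
      Measurable.of_comap_le (by simpa using (eq_comap_iterate_of_succ_eq_comap hF 0 (n + 1)).ge)
    have hsucc : birkhoffSum T (d ∘ T) (n + 1) = birkhoffSum T (d ∘ T) n + d ∘ T^[n + 1] := by
      funext ω
      rw [Pi.add_apply, birkhoffSum_succ, Function.comp_apply, Function.comp_apply,
        Function.iterate_succ_apply']
    rw [hsucc]
    exact (ih.mono (hFmono (by omega)) le_rfl).add (hd.comp hiterate)

theorem condExp_comp_iterate_succ_eq_zero (hT : MeasurePreserving T μ μ)
    (hF : ∀ i, F (i + 1) = (F i).comap T) (hFmono : Monotone F) (hFle : ∀ i, F i ≤ m0)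
    (hd : Integrable d μ) (hd0 : μ[d|F (-1)] =ᵐ[μ] 0) {l : ℤ} {n : ℕ} (hl : l ≤ n) :
    μ[d ∘ T^[n + 1]|F l] =ᵐ[μ] 0 := by
  refine condExp_eq_zero_of_le (hFmono hl) (hFle n) ?_
  have hcomap : F n = (F (-1)).comap T^[n + 1] := by
    simpa using eq_comap_iterate_of_succ_eq_comap hF (-1) (n + 1)
  rw [hcomap]
  refine (condExp_comp_measurePreserving (hT.iterate _) (hFle _) hd).trans ?_
  exact (hT.iterate _).quasiMeasurePreserving.ae_eq hd0

theorem condExp_birkhoffSum_comp_iterate_eq_zero (hT : MeasurePreserving T μ μ)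
    (hF : ∀ i, F (i + 1) = (F i).comap T) (hFmono : Monotone F) (hFle : ∀ i, F i ≤ m0)
    (hd : Integrable d μ) (hd0 : μ[d|F (-1)] =ᵐ[μ] 0) (i j : ℕ) :
    μ[birkhoffSum T (d ∘ T) j ∘ T^[i]|F i] =ᵐ[μ] 0 := by
  have hdT : Integrable (d ∘ T) μ := hT.integrable_comp_of_integrable hd
  induction j with
  | zero => simp
  | succ j ih =>
    have hsucc : birkhoffSum T (d ∘ T) (j + 1) ∘ T^[i]
        = birkhoffSum T (d ∘ T) j ∘ T^[i] + d ∘ T^[j + i + 1] := by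
      funext ω
      rw [Pi.add_apply, Function.comp_apply, birkhoffSum_succ, Function.comp_apply,
        Function.comp_apply, ← Function.iterate_add_apply, ← Function.iterate_succ_apply' T]
      rfl
    have hint : Integrable (birkhoffSum T (d ∘ T) j ∘ T^[i]) μ :=
      (hT.iterate i).integrable_comp_of_integrable
        (memLp_one_iff_integrable.1 ((memLp_one_iff_integrable.2 hdT).birkhoffSum hT j))
    rw [hsucc]
    refine (condExp_add hint ((hT.iterate _).integrable_comp_of_integrable hd) _).trans ?_
    filter_upwards [ih, condExp_comp_iterate_succ_eq_zero hT hF hFmono hFle hd hd0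
      (l := i) (n := j + i) (by omega)] with ω h₁ h₂
    rw [Pi.add_apply, h₁, h₂, Pi.zero_apply, add_zero]

theorem condExp_birkhoffSum_mul_comp_iterate_eq_zero (hT : MeasurePreserving T μ μ)
    (hF : ∀ i, F (i + 1) = (F i).comap T) (hFmono : Monotone F) (hFle : ∀ i, F i ≤ m0)
    (hdm : Measurable[F 0] d) (hd : MemLp d 2 μ) (hd0 : μ[d|F (-1)] =ᵐ[μ] 0) (i j : ℕ) :
    μ[birkhoffSum T (d ∘ T) i * birkhoffSum T (d ∘ T) j ∘ T^[i]|F 0] =ᵐ[μ] 0 := by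
  have hS : ∀ n, MemLp (birkhoffSum T (d ∘ T) n) 2 μ := fun n =>
    (hd.comp_measurePreserving hT).birkhoffSum hT n
  have hshift : MemLp (birkhoffSum T (d ∘ T) j ∘ T^[i]) 2 μ :=
    (hS j).comp_measurePreserving (hT.iterate i)
  exact condExp_mul_eq_zero_of_condExp_eq_zero (hFmono (Nat.cast_nonneg i)) (hFle i)
    (measurable_birkhoffSum_of_succ_eq_comap hF hFmono hdm i).stronglyMeasurable
    ((hS i).integrable_mul hshift) (hshift.integrable one_le_two)
    (condExp_birkhoffSum_comp_iterate_eq_zero hT hF hFmono hFle (hd.integrable one_le_two) hd0 i j)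

theorem eLpNorm_centeredCondSq_birkhoffSum_add_le (hT : MeasurePreserving T μ μ)
    (hF : ∀ i, F (i + 1) = (F i).comap T) (hFmono : Monotone F) (hFle : ∀ i, F i ≤ m0)
    (hdm : Measurable[F 0] d) (hd : MemLp d 2 μ) (hd0 : μ[d|F (-1)] =ᵐ[μ] 0) {r : ℝ≥0∞}
    (hr : 1 ≤ r) (i j : ℕ) :
    eLpNorm (centeredCondSq μ (F 0) (birkhoffSum T (d ∘ T) (i + j))) r μ
      ≤ eLpNorm (centeredCondSq μ (F 0) (birkhoffSum T (d ∘ T) i)) r μ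
        + eLpNorm (centeredCondSq μ (F 0) (birkhoffSum T (d ∘ T) j)) r μ := by
  set S : ℕ → Ω → ℝ := birkhoffSum T (d ∘ T)
  have hS : ∀ n, MemLp (S n) 2 μ := fun n => (hd.comp_measurePreserving hT).birkhoffSum hT n
  have hsplit : centeredCondSq μ (F 0) (S (i + j))
      =ᵐ[μ] centeredCondSq μ (F 0) (S i) + centeredCondSq μ (F 0) (S j ∘ T^[i]) := by
    rw [show S (i + j) = S i + S j ∘ T^[i] from funext (birkhoffSum_add T _ i j)]
    exact centeredCondSq_add (hFle 0) (hS i) ((hS j).comp_measurePreserving (hT.iterate i))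
      (condExp_birkhoffSum_mul_comp_iterate_eq_zero hT hF hFmono hFle hdm hd hd0 i j)
  have hshift : eLpNorm (centeredCondSq μ (F 0) (S j ∘ T^[i])) r μ
      ≤ eLpNorm (centeredCondSq μ (F 0) (S j)) r μ := by
    have hcomap : F 0 = (F (-i)).comap T^[i] := by
      simpa using eq_comap_iterate_of_succ_eq_comap hF (-i) i
    have := eLpNorm_centeredCondSq_comp_le (hT.iterate i) (hFmono (by omega : -(i : ℤ) ≤ 0))
      (hFle 0) (hS j).integrable_sq hr
    rwa [← hcomap] at this
  calc eLpNorm (centeredCondSq μ (F 0) (S (i + j))) r μ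
      = eLpNorm (centeredCondSq μ (F 0) (S i) + centeredCondSq μ (F 0) (S j ∘ T^[i])) r μ :=
        eLpNorm_congr_ae hsplit
    _ ≤ eLpNorm (centeredCondSq μ (F 0) (S i)) r μ
          + eLpNorm (centeredCondSq μ (F 0) (S j ∘ T^[i])) r μ :=
        eLpNorm_add_le (integrable_condExp.sub (integrable_const _)).aestronglyMeasurable
          (integrable_condExp.sub (integrable_const _)).aestronglyMeasurable hr
    _ ≤ _ := by gcongr

end MartingaleDifference

end MeasureTheory

theorem stmt_16_general
    {Ω : Type*} [m0 : MeasurableSpace Ω] (μP : Measure Ω) [IsProbabilityMeasure μP]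
    (T Tinv : Ω → Ω) (hT : MeasurePreserving T μP μP)
    (hTr : Function.RightInverse Tinv T)
    (F : ℤ → MeasurableSpace Ω) (hFle : ∀ i, F i ≤ m0)
    (hF0 : F 0 ≤ MeasurableSpace.comap T (F 0))
    (hFsucc : ∀ i : ℤ, F (i + 1) = MeasurableSpace.comap T (F i))
    (p : ℝ) (hp2 : 2 ≤ p)
    (d0 : Ω → ℝ) (hd0meas : Measurable[F 0] d0) (hd0mem : MemLp d0 (ENNReal.ofReal p) μP)
    (hd0mart : μP[d0|F (-1)] =ᵐ[μP] 0)
    (V : ℕ → ℝ)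
    (hV : ∀ n : ℕ, V n =
      (eLpNorm (fun ω =>
          (μP[fun ω' => (∑ i ∈ Finset.Icc 1 n, d0 (T^[i] ω')) ^ 2|F 0]) ω -
            ∫ ω', (∑ i ∈ Finset.Icc 1 n, d0 (T^[i] ω')) ^ 2 ∂μP)
        (ENNReal.ofReal (p / 2)) μP).toReal) :
    ∀ i j : ℕ, V (i + j) ≤ V i + V j := by
  intro i j
  set q := ENNReal.ofReal (p / 2)
  set Z : ℕ → Ω → ℝ := fun n => centeredCondSq μP (F 0) (birkhoffSum T (d0 ∘ T) n)
  have hq : 1 ≤ q := ENNReal.one_le_ofReal.2 (by linarith)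
  have hZ : ∀ n, MemLp (Z n) q μP := fun n => by
    refine MemLp.centeredCondSq hq ?_
    simpa [q, ENNReal.ofReal_div_of_pos two_pos] using
      ((hd0mem.comp_measurePreserving hT).birkhoffSum hT n).sq
  have hVZ : ∀ n, V n = (eLpNorm (Z n) q μP).toReal := fun n => by
    rw [hV n]
    simp only [Finset.sum_Icc_one_iterate_eq_birkhoffSum]
    rfl
  rw [hVZ, hVZ, hVZ, ← ENNReal.toReal_add (hZ i).eLpNorm_ne_top (hZ j).eLpNorm_ne_top]
  refine ENNReal.toReal_mono (ENNReal.add_ne_top.2 ⟨(hZ i).eLpNorm_ne_top,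
    (hZ j).eLpNorm_ne_top⟩) ?_
  exact eLpNorm_centeredCondSq_birkhoffSum_add_le hT hFsucc
    (monotone_of_succ_eq_comap hTr.surjective hF0 hFsucc) hFle hd0meas
    (hd0mem.mono_exponent (by simpa using ENNReal.ofReal_le_ofReal hp2)) hd0mart hq i j

/-- Subadditivity (inequality (3.12) of the paper) of
`V_n = ‖E₀(M_n²) − E(M_n²)‖_{p/2}` for the martingale `M_n = Σ_{i=1}^n d₀∘Tⁱ`. -/
theorem stmt_16
    {Ω : Type*} [m0 : MeasurableSpace Ω] (μP : Measure Ω) [IsProbabilityMeasure μP]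
    (T Tinv : Ω → Ω) (hT : MeasurePreserving T μP μP) (hTinv : Measurable Tinv)
    (hTl : Function.LeftInverse Tinv T) (hTr : Function.RightInverse Tinv T)
    (F : ℤ → MeasurableSpace Ω) (hFle : ∀ i, F i ≤ m0)
    (hF0 : F 0 ≤ MeasurableSpace.comap T (F 0))
    (hFsucc : ∀ i : ℤ, F (i + 1) = MeasurableSpace.comap T (F i))
    (p : ℝ) (hp2 : 2 ≤ p) (hp4 : p ≤ 4)
    (d0 : Ω → ℝ) (hd0meas : Measurable[F 0] d0) (hd0mem : MemLp d0 (ENNReal.ofReal p) μP)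
    (hd0mart : μP[d0|F (-1)] =ᵐ[μP] 0)
    (V : ℕ → ℝ)
    (hV : ∀ n : ℕ, V n =
      (eLpNorm (fun ω =>
          (μP[fun ω' => (∑ i ∈ Finset.Icc 1 n, d0 (T^[i] ω')) ^ 2|F 0]) ω -
            ∫ ω', (∑ i ∈ Finset.Icc 1 n, d0 (T^[i] ω')) ^ 2 ∂μP)
        (ENNReal.ofReal (p / 2)) μP).toReal) :
    ∀ i j : ℕ, V (i + j) ≤ V i + V j :=
  stmt_16_general (m0 := m0) μP T Tinv hT hTr F hFle hF0 hFsucc p hp2 d0 hd0meas hd0mem hd0mart V hV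
end
end
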